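/- The three vectors (1,1,-1,-1), (-1,1,1,-1), (1,-1,1,-1) form a basis of minimal vectors of L(Z_2 × Z_2): each has squared norm 4 (the minimum), and the 4×3 matrix M̃ with these columns satisfies det(M̃ᵀ M̃) = 64 = |Z_2 × Z_2|^3. -/
import Mathlib


/-- Membership in `L(ℤ_2 × ℤ_2)` with nonzero elements `g₁ = (0,1)`, `g₂ = (1,0)`,
`g₃ = (1,1)`. -/
def memL22 (v : Fin 4 → ℤ) : Prop :=
  v 3 = -(v 0 + v 1 + v 2) ∧
    v 0 • ((0, 1) : ZMod 2 × ZMod 2) + v 1 • ((1, 0) : ZMod 2 × ZMod 2) +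
      v 2 • ((1, 1) : ZMod 2 × ZMod 2) = 0

lemma sq_ge_one_of_ne {x : ℤ} (hx : x ≠ 0) : 1 ≤ x ^ 2 := by
  have h1 : 1 ≤ |x| := Int.one_le_abs hx
  nlinarith [sq_abs x, abs_nonneg x]

lemma key22 (a b c : ℤ) (hbc : 2 ∣ b + c) (hac : 2 ∣ a + c)
    (h : ¬(a = 0 ∧ b = 0 ∧ c = 0)) :
    4 ≤ a ^ 2 + b ^ 2 + c ^ 2 + (-(a + b + c)) ^ 2 := by
  rcases Int.even_or_odd c with hc | hc
  · obtain ⟨k, hk⟩ := hc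
    obtain ⟨m, hm⟩ := hbc
    obtain ⟨n, hn⟩ := hac
    have ha : a = 2 * (n - k) := by omega
    have hb : b = 2 * (m - k) := by omega
    have hone : (n - k) ≠ 0 ∨ (m - k) ≠ 0 ∨ k ≠ 0 := by
      by_contra hcon
      push_neg at hcon
      exact h ⟨by omega, by omega, by omega⟩
    subst ha hb hk
    rcases hone with h1 | h1 | h1
    · have := sq_ge_one_of_ne h1
      nlinarith [sq_nonneg (m - k), sq_nonneg k, sq_nonneg (n + m + k)]
    · have := sq_ge_one_of_ne h1
      nlinarith [sq_nonneg (n - k), sq_nonneg k, sq_nonneg (n + m + k)]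
    · have := sq_ge_one_of_ne h1
      nlinarith [sq_nonneg (n - k), sq_nonneg (m - k), sq_nonneg (n + m + k)]
  · obtain ⟨k, hk⟩ := hc
    have ha : a ≠ 0 := by omega
    have hb : b ≠ 0 := by omega
    have hcne : c ≠ 0 := by omega
    have hd : a + b + c ≠ 0 := by
      obtain ⟨m, hm⟩ := hbc
      omega
    have := sq_ge_one_of_ne ha
    have := sq_ge_one_of_ne hb
    have := sq_ge_one_of_ne hcne
    have hdne : -(a + b + c) ≠ 0 := by omega
    have := sq_ge_one_of_ne hdne
    nlinarith

/-- The three vectors `(1,1,-1,-1)`, `(-1,1,1,-1)`, `(1,-1,1,-1)` form a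
basis of minimal vectors of `L(ℤ_2 × ℤ_2)`: each lies in the lattice and has squared
norm `4` (the minimum), and the `4×3` matrix `M̃` with these columns satisfies
`det(M̃ᵀ M̃) = 64 = |ℤ_2 × ℤ_2|³`. -/
theorem lattice_Z2xZ2_minimal_basis :
    (∀ j : Fin 3,
      memL22 (fun i => (!![(1 : ℤ), -1, 1; 1, 1, -1; -1, 1, 1; -1, -1, -1]) i j) ∧
      ∑ i, ((!![(1 : ℤ), -1, 1; 1, 1, -1; -1, 1, 1; -1, -1, -1]) i j) ^ 2 = 4) ∧
    (∀ v : Fin 4 → ℤ, memL22 v → v ≠ 0 → 4 ≤ ∑ i, (v i) ^ 2) ∧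
    ((!![(1 : ℤ), -1, 1; 1, 1, -1; -1, 1, 1; -1, -1, -1]).transpose *
      (!![(1 : ℤ), -1, 1; 1, 1, -1; -1, 1, 1; -1, -1, -1])).det = 64 ∧
    (64 : ℤ) = (Fintype.card (ZMod 2 × ZMod 2) : ℤ) ^ 3 := by
  refine ⟨?_, ?_, ?_, by simp⟩
  · intro j
    fin_cases j <;>
      exact ⟨⟨by decide, by decide⟩, by decide⟩
  · intro v ⟨h1, h2⟩ hv
    have hmk : ∀ (x : ℤ), x • ((1 : ZMod 2), (0 : ZMod 2)) = ((x : ZMod 2), 0) := by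
      intro x; ext <;> simp [zsmul_eq_mul]
    rw [Prod.ext_iff] at h2
    simp only [Prod.smul_mk, Prod.fst_add, Prod.snd_add, smul_zero, Prod.fst_zero,
      Prod.snd_zero, zsmul_eq_mul, mul_one] at h2
    obtain ⟨h2a, h2b⟩ := h2
    have hbc : (2 : ℤ) ∣ v 1 + v 2 := by
      have : ((v 1 + v 2 : ℤ) : ZMod 2) = 0 := by push_cast; rw [← h2a]; ring
      exact (ZMod.intCast_zmod_eq_zero_iff_dvd _ 2).mp this
    have hac : (2 : ℤ) ∣ v 0 + v 2 := by
      have : ((v 0 + v 2 : ℤ) : ZMod 2) = 0 := by push_cast; rw [← h2b]; ring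
      exact (ZMod.intCast_zmod_eq_zero_iff_dvd _ 2).mp this
    have hne : ¬(v 0 = 0 ∧ v 1 = 0 ∧ v 2 = 0) := by
      rintro ⟨ha, hb, hc⟩
      apply hv
      funext i
      fin_cases i <;> simp_all
    have := key22 (v 0) (v 1) (v 2) hbc hac hne
    rw [Fin.sum_univ_four, h1]
    linarith
  · decide
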